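/- Fix real parameters k > 0, σ1 > 0, σ2 > 0, μ1 > 0, ρ ∈ [−1, 1], η > 0, φ1 > 0, φ2 ≥ 0, φ3 ≥ 0, χ > 0 and a horizon T > 0, and assume φ3·e^{1 + φ2/k} ≥ k·e^{σ2²/(2k) + μ1/k + (ρ/k)·σ1·σ2}. Define g3(t) = √(φ1 η) · (e^{2t√(φ1/η)}(√(φ1 η) − χ) − e^{2T√(φ1/η)}(√(φ1 η) + χ)) / (e^{2t√(φ1/η)}(√(φ1 η) − χ) + e^{2T√(φ1/η)}(√(φ1 η) + χ)); μ̄(s) = e^{−k s}; σ̄(s)² = (σ2²/(2k))(1 − e^{−2 k s}); ĝ(r; t) = exp((1/η)·∫_t^r g3(s) ds + μ1·(r − t)); and g2(t, ε) = 1 − φ3·e^{−ε}·∫_t^T ĝ(r; t) dr − e^{−ε}·∫_t^T ĝ(r; t)·exp(μ̄(r−t)·ε + σ̄(r−t)²/2 + (ρ/k)·σ1·σ2·(1 − μ̄(r−t)))·(k·μ̄(r−t)·ε + k·σ̄(r−t)² − σ2²/2 − ρ·σ1·σ2·μ̄(r−t) − μ1 + φ2) dr. Then g2(t, ε) ≤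 1 for all t ∈ [0, T] and all ε ∈ ℝ. -/

import Mathlib

/-!
With `x = μ̄ ε`, `A = σ̄²/2 + (ρ/k) σ1 σ2 (1 - μ̄)` and `B = k σ̄² - σ2²/2 - ρ σ1 σ2 μ̄ - μ1 + φ2`,
`g2 = 1 - e^{-ε} ∫ ĝ · (φ3 + e^{x + A} (k x + B))` with `ĝ > 0`, so it suffices that the bracket
is nonnegative. From `u e^u ≥ -e^{-1}` we get `e^{x + A} (k x + B) ≥ -k e^{A - B/k - 1}`, and
`A - B/k - 1` equals `σ2²/(2k) + μ1/k + (ρ/k) σ1 σ2 - 1 - φ2/k - σ̄²/2`, so condition (51) together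
with `σ̄² ≥ 0` bounds this minimum by `φ3`. Merging the two integrals needs them to be genuine:
the denominator of `g3` is positive for `t ≤ T`, so `g3` and `ĝ` are continuous.
-/

open Real Set

theorem neg_exp_neg_one_le_mul_exp (u : ℝ) : -exp (-1) ≤ u * exp u := by
  have h : -u * exp u ≤ exp (-u - 1) * exp u :=
    mul_le_mul_of_nonneg_right (by linarith [add_one_le_exp (-u - 1)]) (exp_pos u).le
  rw [← exp_add, show -u - 1 + u = -1 by ring] at h
  linarith

theorem exp_mul_sub_add_exp_mul_add_pos {w χ a u T : ℝ} (hw : 0 < w) (hχ : 0 ≤ χ) (ha : 0 ≤ a)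
    (hu : u ≤ T) : 0 < exp (2 * u * a) * (w - χ) + exp (2 * T * a) * (w + χ) := by
  have hle : exp (2 * u * a) ≤ exp (2 * T * a) := exp_le_exp.2 (by nlinarith)
  nlinarith [exp_pos (2 * u * a), mul_nonneg (sub_nonneg.2 hle) hχ]

theorem sigbarSq_nonneg {k s : ℝ} (hk : 0 < k) (hs : 0 ≤ s) (σ : ℝ) :
    0 ≤ σ ^ 2 / (2 * k) * (1 - exp (-2 * k * s)) :=
  mul_nonneg (by positivity) (sub_nonneg.2 (exp_le_one_iff.2 (by nlinarith)))

theorem neg_mul_exp_le_exp_add_mul_add {k : ℝ} (hk : 0 < k) (x A B : ℝ) :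
    -(k * exp (A - B / k - 1)) ≤ exp (x + A) * (k * x + B) := by
  have h := mul_le_mul_of_nonneg_left (neg_exp_neg_one_le_mul_exp (x + B / k))
    (mul_pos hk (exp_pos (A - B / k))).le
  rw [show x + A = (A - B / k) + (x + B / k) by ring, sub_eq_add_neg _ (1 : ℝ), exp_add,
    exp_add]
  field_simp at h ⊢
  linarith

theorem g2_integrand_nonneg {k σ1 σ2 μ1 ρ φ2 φ3 : ℝ} (hk : 0 < k)
    (hcond : φ3 * exp (1 + φ2 / k) ≥ k * exp (σ2 ^ 2 / (2 * k) + μ1 / k + (ρ / k) * σ1 * σ2))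
    {S : ℝ} (hS : 0 ≤ S) (M ε : ℝ) :
    0 ≤ φ3 + exp (M * ε + S / 2 + (ρ / k) * σ1 * σ2 * (1 - M)) *
      (k * M * ε + k * S - σ2 ^ 2 / 2 - ρ * σ1 * σ2 * M - μ1 + φ2) := by
  have hmin := neg_mul_exp_le_exp_add_mul_add hk (M * ε) (S / 2 + (ρ / k) * σ1 * σ2 * (1 - M))
    (k * S - σ2 ^ 2 / 2 - ρ * σ1 * σ2 * M - μ1 + φ2)
  have hexp : k * exp (S / 2 + (ρ / k) * σ1 * σ2 * (1 - M)
      - (k * S - σ2 ^ 2 / 2 - ρ * σ1 * σ2 * M - μ1 + φ2) / k - 1) ≤ φ3 := by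
    have hcond' : k * exp (σ2 ^ 2 / (2 * k) + μ1 / k + (ρ / k) * σ1 * σ2 - (1 + φ2 / k)) ≤ φ3 := by
      rw [exp_sub, mul_div_assoc', div_le_iff₀ (exp_pos _)]; exact hcond
    refine le_trans (mul_le_mul_of_nonneg_left (exp_le_exp.2 ?_) hk.le) hcond'
    field_simp
    linarith [mul_nonneg hS hk.le]
  calc 0 ≤ φ3 + exp (M * ε + (S / 2 + (ρ / k) * σ1 * σ2 * (1 - M))) *
        (k * (M * ε) + (k * S - σ2 ^ 2 / 2 - ρ * σ1 * σ2 * M - μ1 + φ2)) := by linarith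
    _ = _ := by ring_nf

theorem const_mul_integral_add_integral_nonneg {f g : ℝ → ℝ} {a b c : ℝ} (hab : a ≤ b)
    (hf : ContinuousOn f (Icc a b)) (hg : ContinuousOn g (Icc a b))
    (h : ∀ x ∈ Icc a b, 0 ≤ c * f x + g x) :
    0 ≤ c * (∫ x in a..b, f x) + ∫ x in a..b, g x := by
  rw [← intervalIntegral.integral_const_mul, ← intervalIntegral.integral_add
    ((hf.intervalIntegrable_of_Icc hab).const_mul c) (hg.intervalIntegrable_of_Icc hab)]
  exact intervalIntegral.integral_nonneg hab h

theorem g2_le_one_general (k σ1 σ2 μ1 ρ η φ1 φ2 φ3 χ T : ℝ)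
    (hk : 0 < k) (hη : 0 < η) (hφ1 : 0 < φ1) (hχ : 0 < χ)
    (hcond : φ3 * Real.exp (1 + φ2 / k) ≥
      k * Real.exp (σ2 ^ 2 / (2 * k) + μ1 / k + (ρ / k) * σ1 * σ2))
    (g3 : ℝ → ℝ) (mubar sigbarSq : ℝ → ℝ) (ghat : ℝ → ℝ → ℝ) (g2 : ℝ → ℝ → ℝ)
    (hg3 : ∀ t, g3 t =
      Real.sqrt (φ1 * η) *
        (Real.exp (2 * t * Real.sqrt (φ1 / η)) * (Real.sqrt (φ1 * η) - χ)
          - Real.exp (2 * T * Real.sqrt (φ1 / η)) * (Real.sqrt (φ1 * η) + χ)) /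
        (Real.exp (2 * t * Real.sqrt (φ1 / η)) * (Real.sqrt (φ1 * η) - χ)
          + Real.exp (2 * T * Real.sqrt (φ1 / η)) * (Real.sqrt (φ1 * η) + χ)))
    (hmubar : ∀ s, mubar s = Real.exp (-k * s))
    (hsigbarSq : ∀ s, sigbarSq s = σ2 ^ 2 / (2 * k) * (1 - Real.exp (-2 * k * s)))
    (hghat : ∀ t r, ghat r t =
      Real.exp ((1 / η) * (∫ s in t..r, g3 s) + μ1 * (r - t)))
    (hg2 : ∀ t ε, g2 t ε =
      1 - φ3 * Real.exp (-ε) * (∫ r in t..T, ghat r t)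
        - Real.exp (-ε) * ∫ r in t..T, ghat r t *
            Real.exp (mubar (r - t) * ε + sigbarSq (r - t) / 2
              + (ρ / k) * σ1 * σ2 * (1 - mubar (r - t))) *
            (k * mubar (r - t) * ε + k * sigbarSq (r - t) - σ2 ^ 2 / 2
              - ρ * σ1 * σ2 * mubar (r - t) - μ1 + φ2)) :
    ∀ t ∈ Set.Icc (0 : ℝ) T, ∀ ε : ℝ, g2 t ε ≤ 1 := by
  rintro t ⟨-, htT⟩ ε
  have hg3_cont : ContinuousOn g3 (Icc t T) := by
    rw [funext hg3]
    refine ContinuousOn.div (by fun_prop) (by fun_prop) fun u hu => ?_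
    exact (exp_mul_sub_add_exp_mul_add_pos (sqrt_pos.2 (by positivity)) hχ.le
      (sqrt_nonneg _) hu.2).ne'
  have hghat_cont : ContinuousOn (fun r => ghat r t) (Icc t T) := by
    have hprim : ContinuousOn (fun r => ∫ s in t..r, g3 s) (Icc t T) := by
      simpa only [uIcc_of_le htT] using intervalIntegral.continuousOn_primitive_interval'
        (hg3_cont.intervalIntegrable_of_Icc htT) left_mem_uIcc
    simp only [hghat]
    fun_prop
  have hmubar_cont : Continuous mubar := by rw [funext hmubar]; fun_prop
  have hsigbarSq_cont : Continuous sigbarSq := by rw [funext hsigbarSq]; fun_prop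
  rw [hg2, sub_sub, sub_le_self_iff, mul_comm φ3, mul_assoc, ← mul_add]
  refine mul_nonneg (exp_pos _).le
    (const_mul_integral_add_integral_nonneg htT hghat_cont (by fun_prop) fun r hr => ?_)
  have hS : 0 ≤ sigbarSq (r - t) := by
    rw [hsigbarSq]; exact sigbarSq_nonneg hk (sub_nonneg.2 hr.1) σ2
  have hghat_pos : 0 < ghat r t := by rw [hghat]; exact exp_pos _
  have := mul_nonneg hghat_pos.le (g2_integrand_nonneg hk hcond hS (mubar (r - t)) ε)
  linarith

/-- Proposition 3.1 (inequality part): under condition (51) on the model parameters,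
the explicit solution `g2` satisfies `g2(t, ε) ≤ 1` on `[0, T] × ℝ`. -/
theorem g2_le_one (k σ1 σ2 μ1 ρ η φ1 φ2 φ3 χ T : ℝ)
    (hk : 0 < k) (hσ1 : 0 < σ1) (hσ2 : 0 < σ2) (hμ1 : 0 < μ1)
    (hρ : ρ ∈ Set.Icc (-1 : ℝ) 1) (hη : 0 < η) (hφ1 : 0 < φ1) (hφ2 : 0 ≤ φ2)
    (hφ3 : 0 ≤ φ3) (hχ : 0 < χ) (hT : 0 < T)
    (hcond : φ3 * Real.exp (1 + φ2 / k) ≥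
      k * Real.exp (σ2 ^ 2 / (2 * k) + μ1 / k + (ρ / k) * σ1 * σ2))
    (g3 : ℝ → ℝ) (mubar sigbarSq : ℝ → ℝ) (ghat : ℝ → ℝ → ℝ) (g2 : ℝ → ℝ → ℝ)
    (hg3 : ∀ t, g3 t =
      Real.sqrt (φ1 * η) *
        (Real.exp (2 * t * Real.sqrt (φ1 / η)) * (Real.sqrt (φ1 * η) - χ)
          - Real.exp (2 * T * Real.sqrt (φ1 / η)) * (Real.sqrt (φ1 * η) + χ)) /
        (Real.exp (2 * t * Real.sqrt (φ1 / η)) * (Real.sqrt (φ1 * η) - χ)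
          + Real.exp (2 * T * Real.sqrt (φ1 / η)) * (Real.sqrt (φ1 * η) + χ)))
    (hmubar : ∀ s, mubar s = Real.exp (-k * s))
    (hsigbarSq : ∀ s, sigbarSq s = σ2 ^ 2 / (2 * k) * (1 - Real.exp (-2 * k * s)))
    (hghat : ∀ t r, ghat r t =
      Real.exp ((1 / η) * (∫ s in t..r, g3 s) + μ1 * (r - t)))
    (hg2 : ∀ t ε, g2 t ε =
      1 - φ3 * Real.exp (-ε) * (∫ r in t..T, ghat r t)
        - Real.exp (-ε) * ∫ r in t..T, ghat r t *
            Real.exp (mubar (r - t) * ε + sigbarSq (r - t) / 2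
              + (ρ / k) * σ1 * σ2 * (1 - mubar (r - t))) *
            (k * mubar (r - t) * ε + k * sigbarSq (r - t) - σ2 ^ 2 / 2
              - ρ * σ1 * σ2 * mubar (r - t) - μ1 + φ2)) :
    ∀ t ∈ Set.Icc (0 : ℝ) T, ∀ ε : ℝ, g2 t ε ≤ 1 :=
  g2_le_one_general k σ1 σ2 μ1 ρ η φ1 φ2 φ3 χ T hk hη hφ1 hχ hcond g3 mubar sigbarSq ghat g2 hg3
    hmubar hsigbarSq hghat hg2
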